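/- Let P be a consentaneous partially oriented graph whose underlying graph is a proper interval graph. Then P can be completed to an acyclic local tournament if and only if P contains no directed cycle. -/

import Mathlib

/-!
Fix a proper interval model `(l, r)` of `G`. Ordering a component of `G` by left endpoints, or in
reverse, is an umbrella order, and so is any reordering of twins (vertices with the same closed
neighbourhood) within it; orienting the edges along an umbrella order yields an acyclic local
tournament.

Adjacent vertices of `G⁺` are edges pointing in opposite directions with respect to `l`, so by
consentaneity an arc of `P` forces every edge of its `G⁺`-component pointing the same way to be an
arc. The `G⁺`-component of an edge between non-twins contains an ascending path from the leftmost
to the rightmost vertex of its `G`-component. Hence if some component of `G` carried arcs between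
non-twins in both directions, `P` would have a directed cycle. Otherwise each component can be
ordered in the direction of its arcs, and twins along a linear extension of the arcs of `P`.
-/

/-- An oriented graph: an asymmetric (hence irreflexive) arc relation. -/
def IsOrientedGraph {V : Type*} (A : V → V → Prop) : Prop :=
  ∀ u v : V, A u v → ¬ A v u

/-- A tournament: an oriented graph with an arc between any two distinct vertices. -/
def IsTournament {V : Type*} (A : V → V → Prop) : Prop :=
  IsOrientedGraph A ∧ ∀ u v : V, u ≠ v → A u v ∨ A v u

/-- A local tournament: every out-neighbourhood and every in-neighbourhood
induces a tournament. -/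
def IsLocalTournament {V : Type*} (A : V → V → Prop) : Prop :=
  IsOrientedGraph A ∧
  (∀ v x y : V, A v x → A v y → x ≠ y → A x y ∨ A y x) ∧
  (∀ v x y : V, A x v → A y v → x ≠ y → A x y ∨ A y x)

/-- Local transitivity: the arc relation is transitive when restricted to the
out-neighbourhood of any vertex and to the in-neighbourhood of any vertex
(so these neighbourhoods induce transitive, i.e. triangle-free, subtournaments). -/
def IsLocallyTransitive {V : Type*} (A : V → V → Prop) : Prop :=
  (∀ v x y z : V, A v x → A v y → A v z → A x y → A y z → A x z) ∧
  (∀ v x y z : V, A x v → A y v → A z v → A x y → A y z → A x z)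

/-- A directed cycle of `A` all of whose vertices lie in `S`. -/
def HasCycleIn {V : Type*} (A : V → V → Prop) (S : Set V) : Prop :=
  ∃ (n : ℕ) (f : ZMod n → V), 2 ≤ n ∧ Function.Injective f ∧
    (∀ i, f i ∈ S) ∧ ∀ i : ZMod n, A (f i) (f (i + 1))

/-- A directed cycle somewhere in `A`. -/
def HasDirectedCycle {V : Type*} (A : V → V → Prop) : Prop :=
  HasCycleIn A Set.univ

/-- A partially oriented graph (pog): a symmetric loopless edge relation `E`
together with an asymmetric arc relation `A`, no pair of vertices being joined
by both an edge and an arc. -/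
def IsPog {V : Type*} (E A : V → V → Prop) : Prop :=
  (∀ u v : V, E u v → E v u) ∧ (∀ v : V, ¬ E v v) ∧ IsOrientedGraph A ∧
  (∀ u v : V, E u v → ¬ A u v ∧ ¬ A v u)

/-- `D` is a completion of the pog `(E, A)`: it keeps every arc of `A`,
orients every edge of `E` (in exactly one direction), and contains nothing else. -/
def IsCompletion {V : Type*} (E A D : V → V → Prop) : Prop :=
  IsOrientedGraph D ∧
  (∀ u v : V, A u v → D u v) ∧
  (∀ u v : V, E u v → D u v ∨ D v u) ∧
  (∀ u v : V, D u v → A u v ∨ E u v)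

/-- `T` is obtained from the oriented graph `A` by adding arcs between
non-adjacent pairs only (no arc of `A` is reversed), the result being a
tournament.  This is exactly a completion of the partially oriented complete
graph `A^c` to a tournament. -/
def CompletesToTournament {V : Type*} (A T : V → V → Prop) : Prop :=
  (∀ u v : V, A u v → T u v) ∧ (∀ u v : V, T u v → ¬ A v u) ∧ IsTournament T

/-- A round ordering of the arc relation `A`: a cyclic ordering (a bijection
from `ZMod n`) in which the out-neighbours of each vertex appear consecutively
immediately after it and its in-neighbours consecutively immediately before it. -/
def IsRoundOrdering {V : Type*} (A : V → V → Prop) {n : ℕ} (f : ZMod n → V) : Prop :=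
  Function.Bijective f ∧
  (∀ i j : ZMod n, A (f i) (f j) ↔ 1 ≤ (j - i).val ∧ (j - i).val ≤ {u | A (f i) u}.ncard) ∧
  (∀ i j : ZMod n, A (f j) (f i) ↔ 1 ≤ (i - j).val ∧ (i - j).val ≤ {u | A u (f i)}.ncard)

/-- The cyclic ordering given by `f : ZMod n → V` is excellent for the arc
relation `A`: there is no pair of arcs `(f i, f j)`, `(f s, f t)` whose vertices
occur in the cyclic order `f i, f t, f s, f j` (positions measured from `i`;
the degenerate cases `i = t` and `s = j` are allowed). -/
def IsExcellent {V : Type*} (A : V → V → Prop) {n : ℕ} (f : ZMod n → V) : Prop :=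
  ¬ ∃ i j s t : ZMod n, A (f i) (f j) ∧ A (f s) (f t) ∧
      (t - i).val ≤ (s - i).val ∧ (s - i).val ≤ (j - i).val

/-- The vertex set of the auxiliary graph `G⁺`: ordered pairs `(u,v)` with
`uv` an edge of `G`. -/
abbrev EdgePair {V : Type*} (G : SimpleGraph V) := {p : V × V // G.Adj p.1 p.2}

/-- The adjacency rule of the auxiliary graph `G⁺`. -/
def auxRel {V : Type*} (G : SimpleGraph V) (x y : EdgePair G) : Prop :=
  (x.1.1 = y.1.1 ∧ ¬ G.Adj x.1.2 y.1.2) ∨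
  (¬ G.Adj x.1.1 y.1.1 ∧ x.1.2 = y.1.2) ∨
  (x.1.1 = y.1.2 ∧ x.1.2 = y.1.1)

/-- The auxiliary graph `G⁺` of a graph `G`. -/
def auxGraph {V : Type*} (G : SimpleGraph V) : SimpleGraph (EdgePair G) :=
  SimpleGraph.fromRel (auxRel G)

/-- An orientation of a graph `G`: an asymmetric choice of exactly one
direction for each edge of `G`. -/
def IsOrientation {V : Type*} (G : SimpleGraph V) (D : V → V → Prop) : Prop :=
  (∀ u v : V, D u v → G.Adj u v) ∧ (∀ u v : V, D u v → ¬ D v u) ∧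
  (∀ u v : V, G.Adj u v → D u v ∨ D v u)

/-- The arcs `A` of a partial orientation of `G` are consentaneous: no two arcs
correspond to vertices of `G⁺` at odd distance, and for vertices of `G⁺` at even
distance (in the same component) either both corresponding arcs are present or
neither is. -/
def Consentaneous {V : Type*} (G : SimpleGraph V) (A : V → V → Prop) : Prop :=
  (¬ ∃ x y : EdgePair G, A x.1.1 x.1.2 ∧ A y.1.1 y.1.2 ∧ Odd ((auxGraph G).dist x y)) ∧
  (∀ x y : EdgePair G, (auxGraph G).Reachable x y → Even ((auxGraph G).dist x y) →
    (A x.1.1 x.1.2 ↔ A y.1.1 y.1.2))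

/-- The edge `uv` of the underlying graph is oriented in the partial orientation `A`. -/
def EdgeOriented {V : Type*} (A : V → V → Prop) (u v : V) : Prop := A u v ∨ A v u

/-- `P = (G, A)` has no bad triple: no triangle of `G` whose three edges lie in
three different connected components of `G⁺` and exactly two of whose edges are
oriented. -/
def NoBadTriple {V : Type*} (G : SimpleGraph V) (A : V → V → Prop) : Prop :=
  ¬ ∃ (x y z : V) (hxy : G.Adj x y) (hyz : G.Adj y z) (hzx : G.Adj z x),
    ¬ (auxGraph G).Reachable ⟨(x, y), hxy⟩ ⟨(y, z), hyz⟩ ∧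
    ¬ (auxGraph G).Reachable ⟨(y, z), hyz⟩ ⟨(z, x), hzx⟩ ∧
    ¬ (auxGraph G).Reachable ⟨(x, y), hxy⟩ ⟨(z, x), hzx⟩ ∧
    ((EdgeOriented A x y ∧ EdgeOriented A y z ∧ ¬ EdgeOriented A z x) ∨
     (EdgeOriented A x y ∧ ¬ EdgeOriented A y z ∧ EdgeOriented A z x) ∨
     (¬ EdgeOriented A x y ∧ EdgeOriented A y z ∧ EdgeOriented A z x))

/-- A proper interval graph: intersection graph of a family of real intervals
none of which contains another. -/
def IsProperIntervalGraph {V : Type*} (G : SimpleGraph V) : Prop :=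
  ∃ l r : V → ℝ, (∀ v, l v ≤ r v) ∧
    (∀ u v : V, u ≠ v → ¬ (l u ≤ l v ∧ r v ≤ r u)) ∧
    (∀ u v : V, u ≠ v → (G.Adj u v ↔ l u ≤ r v ∧ l v ≤ r u))

section DirectedCycles

variable {V : Type*} {A : V → V → Prop}

lemma HasDirectedCycle.mono {B : V → V → Prop} (hAB : ∀ u v, A u v → B u v)
    (h : HasDirectedCycle A) : HasDirectedCycle B := by
  obtain ⟨n, f, hn, hf, hS, hstep⟩ := h
  exact ⟨n, f, hn, hf, hS, fun i => hAB _ _ (hstep i)⟩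

lemma not_hasDirectedCycle_of_lt {α : Type*} [LinearOrder α] (φ : V → α)
    (hφ : ∀ u v, A u v → φ u < φ v) : ¬ HasDirectedCycle A := by
  rintro ⟨n, f, hn, -, -, hstep⟩
  have : NeZero n := ⟨by omega⟩
  obtain ⟨i, -, hi⟩ := Finset.exists_max_image Finset.univ (φ ∘ f) ⟨0, Finset.mem_univ 0⟩
  exact (hφ _ _ (hstep i)).not_ge (hi _ (Finset.mem_univ _))

lemma exists_walk_of_transGen {a b : V} (h : Relation.TransGen A a b) :
    ∃ (n : ℕ) (g : ℕ → V), 1 ≤ n ∧ g 0 = a ∧ g n = b ∧ ∀ i < n, A (g i) (g (i + 1)) := by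
  induction h with
  | @single c h =>
    exact ⟨1, fun i => if i = 0 then a else c, le_rfl, rfl, rfl, by simpa using h⟩
  | @tail c d _ hcd ih =>
    obtain ⟨n, g, hn, hg0, hgn, hstep⟩ := ih
    refine ⟨n + 1, fun i => if i ≤ n then g i else d, by omega, by simpa using hg0, by simp,
      fun i hi => ?_⟩
    rcases Nat.lt_or_ge i n with hin | hin
    · simpa [hin.le, Nat.succ_le_of_lt hin] using hstep i hin
    · obtain rfl : i = n := by omega
      simpa [hgn] using hcd

/-- A shortest closed walk is a directed cycle. -/
lemma hasDirectedCycle_of_closed_walk (hirr : ∀ v, ¬ A v v) (n : ℕ) (g : ℕ → V)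
    (hn : 1 ≤ n) (hg : g n = g 0) (hstep : ∀ i < n, A (g i) (g (i + 1))) : HasDirectedCycle A := by
  induction n using Nat.strong_induction_on generalizing g with
  | _ n ih =>
  by_cases hdup : ∃ i j, i < j ∧ j < n ∧ g i = g j
  · obtain ⟨i, j, hij, hjn, he⟩ := hdup
    refine ih (j - i) (by omega) (fun t => g (i + t)) (by omega) ?_ fun t ht => ?_
    · simp only [Nat.add_sub_cancel' hij.le, add_zero, he]
    · simpa only [add_assoc] using hstep (i + t) (by omega)
  push Not at hdup
  have hn2 : 2 ≤ n := by
    by_contra h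
    obtain rfl : n = 1 := by omega
    exact hirr _ (by simpa [hg] using hstep 0 one_pos)
  have : NeZero n := ⟨by omega⟩
  refine ⟨n, fun k => g k.val, hn2, fun k₁ k₂ hk => ?_, fun _ => Set.mem_univ _, fun i => ?_⟩
  · by_contra hne
    rcases lt_or_gt_of_ne ((ZMod.val_injective n).ne hne) with h | h
    · exact hdup _ _ h (ZMod.val_lt k₂) hk
    · exact hdup _ _ h (ZMod.val_lt k₁) hk.symm
  · have hval : (i + 1).val = (i.val + 1) % n := by
      rw [ZMod.val_add, ZMod.val_one'' (by omega)]
    show A (g i.val) (g (i + 1).val)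
    rcases Nat.lt_or_ge (i.val + 1) n with h | h
    · rw [hval, Nat.mod_eq_of_lt h]
      exact hstep i.val (by omega)
    · obtain hi : i.val + 1 = n := by have := ZMod.val_lt i; omega
      have h0 : (i + 1).val = 0 := by rw [hval, hi, Nat.mod_self]
      have := hstep i.val (by omega)
      rwa [hi, hg, ← h0] at this

lemma hasDirectedCycle_of_transGen (hirr : ∀ v, ¬ A v v) {v : V}
    (h : Relation.TransGen A v v) : HasDirectedCycle A := by
  obtain ⟨n, g, hn, hg0, hgn, hstep⟩ := exists_walk_of_transGen h
  exact hasDirectedCycle_of_closed_walk hirr n g hn (hgn.trans hg0.symm) hstep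

lemma exists_injective_lt_of_acyclic [Fintype V] (hA : ∀ v, ¬ Relation.TransGen A v v) :
    ∃ τ : V → ℕ, Function.Injective τ ∧ ∀ u v, A u v → τ u < τ v := by
  classical
  have : IsPartialOrder V (Relation.ReflTransGen A) :=
    { refl := fun _ => .refl
      trans := fun _ _ _ => .trans
      antisymm := fun a b hab hba => by
        rcases Relation.reflTransGen_iff_eq_or_transGen.mp hab with h | h
        · exact h.symm
        rcases Relation.reflTransGen_iff_eq_or_transGen.mp hba with h' | h'
        · exact h'
        exact (hA a (h.trans h')).elim }
  obtain ⟨s, hs, hAs⟩ := extend_partialOrder (Relation.ReflTransGen A)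
  -- the rank of a vertex in the linear order `s`
  have hlt : ∀ a b, a ≠ b → s a b →
      (Finset.univ.filter (s · a)).card < (Finset.univ.filter (s · b)).card := by
    refine fun a b hab hsab => Finset.card_lt_card ⟨fun w hw => ?_, fun hba => ?_⟩
    · simp only [Finset.mem_filter, Finset.mem_univ, true_and] at hw ⊢
      exact hs.trans _ _ _ hw hsab
    · have := hba (by simpa using hs.refl b)
      simp only [Finset.mem_filter, Finset.mem_univ, true_and] at this
      exact hab (hs.antisymm _ _ hsab this)
  refine ⟨fun v => (Finset.univ.filter (s · v)).card, fun u v huv => ?_, fun u v huv => ?_⟩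
  · by_contra hne
    rcases hs.total u v with h | h
    · exact (hlt u v hne h).ne huv
    · exact (hlt v u (Ne.symm hne) h).ne huv.symm
  · refine hlt u v (fun he => hA u ?_) (hAs _ _ (.single huv))
    exact .single (he ▸ huv)

end DirectedCycles

lemma wellFounded_lt_comp {V α : Type*} [Finite V] [Preorder α] (f : V → α) :
    WellFounded (fun a b : V => f a < f b) :=
  have : IsTrans V (fun a b => f a < f b) := ⟨fun _ _ _ => lt_trans⟩
  have : Std.Irrefl (fun a b : V => f a < f b) := ⟨fun _ => lt_irrefl _⟩
  Finite.wellFounded_of_trans_of_irrefl _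

namespace SimpleGraph

variable {V : Type*} (G : SimpleGraph V)

def Twins (u v : V) : Prop := ∀ w, (w = u ∨ G.Adj u w) ↔ (w = v ∨ G.Adj v w)

def IsUmbrella {α : Type*} [LinearOrder α] (φ : V → α) : Prop :=
  ∀ u v w, G.Reachable u v → φ u < φ v → φ v < φ w → G.Adj u w → G.Adj u v ∧ G.Adj v w

variable {G}

lemma Reachable.preserves {P : V → Prop} (hP : ∀ a b, G.Adj a b → P a → P b) {u v : V}
    (h : G.Reachable u v) (hu : P u) : P v := by
  obtain ⟨w⟩ := h
  induction w with
  | nil => exact hu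
  | cons hadj _ ih => exact ih (hP _ _ hadj hu)

namespace Twins

lemma refl (u : V) : G.Twins u u := fun _ => Iff.rfl

lemma symm {u v : V} (h : G.Twins u v) : G.Twins v u := fun w => (h w).symm

lemma trans {u v w : V} (h : G.Twins u v) (h' : G.Twins v w) : G.Twins u w :=
  fun z => (h z).trans (h' z)

lemma adj {u v : V} (h : G.Twins u v) (hne : u ≠ v) : G.Adj u v :=
  (((h u).1 (Or.inl rfl)).resolve_left hne).symm

lemma adj_iff {u v w : V} (h : G.Twins u v) (hu : w ≠ u) (hv : w ≠ v) :
    G.Adj u w ↔ G.Adj v w := by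
  simpa [hu, hv] using h w

lemma reachable {u v : V} (h : G.Twins u v) : G.Reachable u v := by
  rcases eq_or_ne u v with rfl | hne
  · rfl
  · exact (h.adj hne).reachable

end Twins

lemma ne_of_not_twins {u v : V} (h : ¬ G.Twins u v) : u ≠ v := by
  rintro rfl
  exact h (.refl u)

lemma exists_adj_not_adj_of_not_twins {x y : V} (hxy : G.Adj x y) (h : ¬ G.Twins x y) :
    (∃ w, w ≠ y ∧ G.Adj x w ∧ ¬ G.Adj y w) ∨ (∃ w, w ≠ x ∧ G.Adj y w ∧ ¬ G.Adj x w) := by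
  by_contra hc
  push Not at hc
  refine h fun w => ⟨?_, ?_⟩
  · rintro (rfl | hw)
    · exact Or.inr hxy.symm
    · exact (eq_or_ne w y).imp id fun hwy => hc.1 w hwy hw
  · rintro (rfl | hw)
    · exact Or.inr hxy
    · exact (eq_or_ne w x).imp id fun hwx => hc.2 w hwx hw

section Umbrella

variable {α : Type*} [LinearOrder α]

lemma IsUmbrella.isLocalTournament {φ : V → α} (h : G.IsUmbrella φ)
    (hφ : Function.Injective φ) : IsLocalTournament (fun u v => G.Adj u v ∧ φ u < φ v) := by
  have orient : ∀ x y, x ≠ y → G.Adj x y →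
      (G.Adj x y ∧ φ x < φ y) ∨ (G.Adj y x ∧ φ y < φ x) := fun x y hne hxy =>
    (lt_or_gt_of_ne (hφ.ne hne)).imp (⟨hxy, ·⟩) (⟨hxy.symm, ·⟩)
  refine ⟨fun u v huv hvu => huv.2.not_gt hvu.2, fun v x y hx hy hne => orient x y hne ?_,
    fun v x y hx hy hne => orient x y hne ?_⟩
  · wlog hxy : φ x < φ y generalizing x y
    · exact (this y x hy hx hne.symm ((lt_or_gt_of_ne (hφ.ne hne)).resolve_left hxy)).symm
    exact (h v x y hx.1.reachable hx.2 hxy hy.1).2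
  · wlog hxy : φ x < φ y generalizing x y
    · exact (this y x hy hx hne.symm ((lt_or_gt_of_ne (hφ.ne hne)).resolve_left hxy)).symm
    exact (h x y v (hx.1.reachable.trans hy.1.reachable.symm) hxy hy.2 hx.1).1

lemma isOrientation_of_injective {φ : V → α} (hφ : Function.Injective φ) :
    IsOrientation G (fun u v => G.Adj u v ∧ φ u < φ v) :=
  ⟨fun _ _ h => h.1, fun _ _ huv hvu => huv.2.not_gt hvu.2, fun _ _ huv =>
    (lt_or_gt_of_ne (hφ.ne huv.ne)).imp (⟨huv, ·⟩) (⟨huv.symm, ·⟩)⟩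

lemma IsUmbrella.lex {β : Type*} [LinearOrder β] {ψ : V → α} (h : G.IsUmbrella ψ)
    (htw : ∀ u v, G.Reachable u v → ψ u = ψ v → G.Twins u v) (τ : V → β) :
    G.IsUmbrella (fun v => toLex (ψ v, τ v)) := by
  intro u v w huv hlt₁ hlt₂ huw
  have hne : ∀ {a b}, toLex (ψ a, τ a) < toLex (ψ b, τ b) → a ≠ b := by
    rintro a b hab rfl
    exact lt_irrefl _ hab
  have huv_ne := hne hlt₁
  have hvw_ne := hne hlt₂
  have huw_ne := hne (hlt₁.trans hlt₂)
  rw [Prod.Lex.toLex_lt_toLex] at hlt₁ hlt₂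
  rcases hlt₁ with hψ₁ | ⟨hψ₁, -⟩
  · rcases hlt₂ with hψ₂ | ⟨hψ₂, -⟩
    · exact h u v w huv hψ₁ hψ₂ huw
    · have hvw := htw v w (huv.symm.trans huw.reachable) hψ₂
      exact ⟨((hvw.symm.adj_iff huw_ne huv_ne).1 huw.symm).symm, hvw.adj hvw_ne⟩
  · have huv' := htw u v huv hψ₁
    exact ⟨huv'.adj huv_ne, (huv'.adj_iff huw_ne.symm hvw_ne.symm).1 huw⟩

end Umbrella

end SimpleGraph

section ProperInterval

variable {V : Type*}

structure IsProperIntervalModel (G : SimpleGraph V) (l r : V → ℝ) : Prop where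
  le : ∀ v, l v ≤ r v
  not_nested : ∀ u v, u ≠ v → ¬ (l u ≤ l v ∧ r v ≤ r u)
  adj_iff : ∀ u v, u ≠ v → (G.Adj u v ↔ l u ≤ r v ∧ l v ≤ r u)

namespace IsProperIntervalModel

variable {G : SimpleGraph V} {l r : V → ℝ} (hR : IsProperIntervalModel G l r)
include hR

lemma neg : IsProperIntervalModel G (fun v => -r v) (fun v => -l v) where
  le v := neg_le_neg (hR.le v)
  not_nested u v huv h := hR.not_nested u v huv ⟨neg_le_neg_iff.1 h.2, neg_le_neg_iff.1 h.1⟩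
  adj_iff u v huv := by rw [hR.adj_iff u v huv, neg_le_neg_iff, neg_le_neg_iff, and_comm]

lemma injective : Function.Injective l := fun u v h => by
  by_contra hne
  refine hR.not_nested u v hne ⟨h.le, not_lt.1 fun hr => ?_⟩
  exact hR.not_nested v u (Ne.symm hne) ⟨h.ge, hr.le⟩

lemma lt_iff_r_lt {u v : V} : l u < l v ↔ r u < r v := by
  rcases eq_or_ne u v with rfl | hne
  · simp
  constructor
  · exact fun h => not_le.1 fun hr => hR.not_nested u v hne ⟨h.le, hr⟩
  · exact fun h => not_le.1 fun hl => hR.not_nested v u (Ne.symm hne) ⟨hl, h.le⟩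

lemma le_iff_r_le {u v : V} : l u ≤ l v ↔ r u ≤ r v := by
  simpa only [not_lt] using hR.lt_iff_r_lt.not

lemma umbrella {u v w : V} (huv : l u < l v) (hvw : l v < l w) (huw : G.Adj u w) :
    G.Adj u v ∧ G.Adj v w := by
  have hlw := ((hR.adj_iff u w huw.ne).1 huw).2
  have hru := hR.lt_iff_r_lt.1 huv
  have hrv := hR.lt_iff_r_lt.1 hvw
  refine ⟨(hR.adj_iff u v (ne_of_apply_ne l huv.ne)).2 ⟨?_, ?_⟩,
    (hR.adj_iff v w (ne_of_apply_ne l hvw.ne)).2 ⟨?_, ?_⟩⟩ <;>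
    linarith [hR.le u, hR.le v]

lemma lt_of_not_lt {u v : V} (hne : u ≠ v) (h : ¬ l u < l v) : l v < l u :=
  (lt_or_gt_of_ne (hR.injective.ne hne)).resolve_left h

lemma lt_iff_lt_of_not_adj {a b c : V} (hab : G.Adj a b) (hac : G.Adj a c) (hbc : ¬ G.Adj b c)
    (hne : b ≠ c) : l a < l b ↔ l c < l a := by
  have hb := hR.injective.ne hab.ne
  have hc := hR.injective.ne hac.ne
  rcases lt_or_gt_of_ne hb with h₁ | h₁ <;> rcases lt_or_gt_of_ne hc with h₂ | h₂
  · rcases lt_or_gt_of_ne (hR.injective.ne hne) with h | h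
    · exact absurd (hR.umbrella h₁ h hac).2 hbc
    · exact absurd (hR.umbrella h₂ h hab).2.symm hbc
  · exact iff_of_true h₁ h₂
  · exact iff_of_false (lt_asymm h₁) (lt_asymm h₂)
  · rcases lt_or_gt_of_ne (hR.injective.ne hne) with h | h
    · exact absurd (hR.umbrella h h₂ hab.symm).1 hbc
    · exact absurd (hR.umbrella h h₁ hac.symm).1.symm hbc

lemma exists_adj_lt_of_reachable {u x : V} (h : G.Reachable u x) (hlt : l u < l x) :
    ∃ w, G.Adj w x ∧ l w < l x := by
  obtain ⟨p⟩ := h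
  induction p with
  | nil => exact absurd hlt (lt_irrefl _)
  | @cons a b c hab _ ih =>
    rcases lt_trichotomy (l b) (l c) with h | h | h
    · exact ih h
    · exact ⟨a, hR.injective h ▸ hab, hlt⟩
    · exact ⟨a, (hR.umbrella hlt h hab).1, hlt⟩

lemma twins_of_le_of_le {a b x : V} (hab : G.Twins a b) (hax : l a ≤ l x) (hxb : l x ≤ l b) :
    G.Twins a x := by
  rcases hax.eq_or_lt with h | hax
  · rw [← hR.injective h]
    exact .refl a
  rcases hxb.eq_or_lt with h | hxb
  · rwa [hR.injective h]
  obtain ⟨hax', hxb'⟩ := hR.umbrella hax hxb (hab.adj (ne_of_apply_ne l (hax.trans hxb).ne))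
  -- as `N[a] = N[b]`, it suffices that `N[a] ∩ N[b] ⊆ N[x] ⊆ N[a] ∪ N[b]`
  have hinter : ∀ w, (w = a ∨ G.Adj a w) → (w = b ∨ G.Adj b w) → (w = x ∨ G.Adj x w) := by
    intro w ha hb
    rcases lt_trichotomy (l w) (l x) with h | h | h
    · rcases hb with rfl | hb
      · exact absurd hxb (lt_asymm h)
      · exact Or.inr (hR.umbrella h hxb hb.symm).1.symm
    · exact Or.inl (hR.injective h)
    · rcases ha with rfl | ha
      · exact absurd hax (lt_asymm h)
      · exact Or.inr (hR.umbrella hax h ha).2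
  have hunion : ∀ w, (w = x ∨ G.Adj x w) → (w = a ∨ G.Adj a w) ∨ (w = b ∨ G.Adj b w) := by
    rintro w (rfl | hxw)
    · exact Or.inl (Or.inr hax')
    rcases lt_trichotomy (l w) (l a) with h | h | h
    · exact Or.inl (Or.inr (hR.umbrella h hax hxw.symm).1.symm)
    · exact Or.inl (Or.inl (hR.injective h))
    rcases lt_trichotomy (l w) (l b) with h' | h' | h'
    · exact Or.inl (Or.inr (hR.umbrella h h' (hab.adj (ne_of_apply_ne l (h.trans h').ne))).1)
    · exact Or.inr (Or.inl (hR.injective h'))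
    · exact Or.inr (Or.inr (hR.umbrella hxb h' hxw).2)
  exact fun w =>
    ⟨fun hw => hinter w hw ((hab w).1 hw), fun hw => (hunion w hw).elim id (hab w).2⟩

end IsProperIntervalModel

end ProperInterval

section AuxGraph

variable {V : Type*} {G : SimpleGraph V}

lemma auxGraph_adj_swap {x y : V} (h : G.Adj x y) :
    (auxGraph G).Adj ⟨(x, y), h⟩ ⟨(y, x), h.symm⟩ := by
  rw [auxGraph, SimpleGraph.fromRel_adj]
  exact ⟨fun he => h.ne (congrArg (·.1.1) he), Or.inl (Or.inr (Or.inr ⟨rfl, rfl⟩))⟩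

lemma auxGraph_adj_of_not_adj {x y w : V} (hxy : G.Adj x y) (hwy : G.Adj w y) (hne : x ≠ w)
    (hxw : ¬ G.Adj x w) : (auxGraph G).Adj ⟨(x, y), hxy⟩ ⟨(w, y), hwy⟩ := by
  rw [auxGraph, SimpleGraph.fromRel_adj]
  exact ⟨fun he => hne (congrArg (·.1.1) he), Or.inl (Or.inr (Or.inl ⟨hxw, rfl⟩))⟩

lemma reachable_fst_of_auxGraph_adj {p q : EdgePair G} (h : (auxGraph G).Adj p q) :
    G.Reachable p.1.1 q.1.1 := by
  have hp := p.2.reachable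
  have hq := q.2.reachable
  rw [auxGraph, SimpleGraph.fromRel_adj] at h
  rcases h.2 with (⟨h, -⟩ | ⟨-, h⟩ | ⟨h, -⟩) | (⟨h, -⟩ | ⟨-, h⟩ | ⟨-, h⟩)
  · rw [h]
  · exact hp.trans (h ▸ hq.symm)
  · exact h ▸ hq.symm
  · rw [h]
  · exact hp.trans (h ▸ hq.symm)
  · exact h ▸ hq.symm

lemma twins_of_auxGraph_adj {p q : EdgePair G} (h : (auxGraph G).Adj p q)
    (hp : G.Twins p.1.1 p.1.2) : G.Twins q.1.1 q.1.2 := by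
  obtain ⟨⟨x, y⟩, hxy⟩ := p
  obtain ⟨⟨a, b⟩, hab⟩ := q
  rw [auxGraph, SimpleGraph.fromRel_adj] at h
  obtain ⟨hne, h⟩ := h
  simp only [auxRel, ne_eq, Subtype.mk.injEq, Prod.mk.injEq] at h hne hp ⊢
  rcases h with (⟨rfl, h⟩ | ⟨h, rfl⟩ | ⟨rfl, rfl⟩) | (⟨rfl, h⟩ | ⟨h, rfl⟩ | ⟨rfl, rfl⟩)
  · exact absurd ((hp.adj_iff hab.ne' fun hb => hne ⟨rfl, hb.symm⟩).1 hab) h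
  · exact absurd ((hp.adj_iff (fun ha => hne ⟨ha.symm, rfl⟩) hab.ne).2 hab.symm) h
  · exact hp.symm
  · exact absurd ((hp.adj_iff hab.ne' fun hb => hne ⟨rfl, hb.symm⟩).1 hab).symm h
  · exact absurd ((hp.adj_iff (fun ha => hne ⟨ha.symm, rfl⟩) hab.ne).2 hab.symm).symm h
  · exact hp.symm

def InAuxComponent (G : SimpleGraph V) (p : EdgePair G) (x y : V) : Prop :=
  ∃ h : G.Adj x y, (auxGraph G).Reachable p ⟨(x, y), h⟩

namespace InAuxComponent

variable {p : EdgePair G} {x y : V}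

lemma adj (h : InAuxComponent G p x y) : G.Adj x y := h.1

lemma swap (h : InAuxComponent G p x y) : InAuxComponent G p y x :=
  ⟨h.1.symm, h.2.trans (auxGraph_adj_swap h.1).reachable⟩

lemma of_not_adj (h : InAuxComponent G p x y) {w : V} (hwy : G.Adj w y) (hne : x ≠ w)
    (hxw : ¬ G.Adj x w) : InAuxComponent G p w y :=
  ⟨hwy, h.2.trans (auxGraph_adj_of_not_adj h.1 hwy hne hxw).reachable⟩

lemma reachable (h : InAuxComponent G p x y) : G.Reachable p.1.1 x :=
  h.2.preserves (P := fun q => G.Reachable p.1.1 q.1.1)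
    (fun _ _ hab h => h.trans (reachable_fst_of_auxGraph_adj hab)) (.refl _)

lemma not_twins (h : InAuxComponent G p x y) (hp : ¬ G.Twins p.1.1 p.1.2) : ¬ G.Twins x y :=
  fun hxy => hp (h.2.symm.preserves (P := fun q => G.Twins q.1.1 q.1.2)
    (fun _ _ hab => twins_of_auxGraph_adj hab) hxy)

end InAuxComponent

end AuxGraph

def AscendingIn {V : Type*} (G : SimpleGraph V) (l : V → ℝ) (p : EdgePair G) (a b : V) : Prop :=
  InAuxComponent G p a b ∧ l a < l b

namespace IsProperIntervalModel

variable {V : Type*} {G : SimpleGraph V} {l r : V → ℝ} (hR : IsProperIntervalModel G l r)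
include hR

lemma lt_iff_not_lt_of_auxGraph_adj {p q : EdgePair G} (h : (auxGraph G).Adj p q) :
    l p.1.1 < l p.1.2 ↔ ¬ l q.1.1 < l q.1.2 := by
  obtain ⟨⟨x, y⟩, hxy⟩ := p
  obtain ⟨⟨a, b⟩, hab⟩ := q
  rw [auxGraph, SimpleGraph.fromRel_adj] at h
  obtain ⟨hne, h⟩ := h
  simp only [auxRel, ne_eq, Subtype.mk.injEq, Prod.mk.injEq] at h hne ⊢
  have hlt : ∀ {u v}, u ≠ v → (l u < l v ↔ ¬ l v < l u) := fun huv =>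
    ⟨lt_asymm, hR.lt_of_not_lt huv.symm⟩
  rcases h with (⟨rfl, h⟩ | ⟨h, rfl⟩ | ⟨rfl, rfl⟩) | (⟨rfl, h⟩ | ⟨h, rfl⟩ | ⟨rfl, rfl⟩)
  · rw [hR.lt_iff_lt_of_not_adj hxy hab h fun hb => hne ⟨rfl, hb⟩, hlt hab.ne']
  · rw [← hR.lt_iff_lt_of_not_adj hxy.symm hab.symm h fun ha => hne ⟨ha, rfl⟩, hlt hxy.ne]
  · exact hlt hxy.ne
  · rw [hR.lt_iff_lt_of_not_adj hxy hab (fun h' => h h'.symm) fun hb => hne ⟨rfl, hb⟩,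
      hlt hab.ne']
  · rw [← hR.lt_iff_lt_of_not_adj hxy.symm hab.symm (fun h' => h h'.symm) fun ha => hne ⟨ha, rfl⟩,
      hlt hxy.ne]
  · exact hlt hxy.ne

lemma even_length_iff {p q : EdgePair G} (w : (auxGraph G).Walk p q) :
    Even w.length ↔ (l p.1.1 < l p.1.2 ↔ l q.1.1 < l q.1.2) := by
  induction w with
  | nil => simp
  | cons h _ ih =>
    rw [SimpleGraph.Walk.length_cons, Nat.even_add_one, ih, hR.lt_iff_not_lt_of_auxGraph_adj h]
    tauto

lemma even_dist_iff {p q : EdgePair G} (h : (auxGraph G).Reachable p q) :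
    Even ((auxGraph G).dist p q) ↔ (l p.1.1 < l p.1.2 ↔ l q.1.1 < l q.1.2) := by
  obtain ⟨w, hw⟩ := h.exists_walk_length_eq_dist
  rw [← hw]
  exact hR.even_length_iff w

lemma arc_of_inAuxComponent {A : V → V → Prop} (hcons : Consentaneous G A) {p : EdgePair G}
    (hp : A p.1.1 p.1.2) {x y : V} (h : InAuxComponent G p x y)
    (hdir : l x < l y ↔ l p.1.1 < l p.1.2) : A x y :=
  (hcons.2 p ⟨(x, y), h.1⟩ h.2 ((hR.even_dist_iff h.2).2 hdir.symm)).1 hp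

section AscendingPaths

variable [Fintype V] {p : EdgePair G} (hp : ¬ G.Twins p.1.1 p.1.2)
include hp

/-- Induction on `l x`. A neighbour `w` of `x` not adjacent to `y` lies left of `x`, and `(w, x)` is
an ascending edge of the component. Otherwise, unless `x = m`, a left neighbour `t` of `x` is
adjacent to `y`, and a neighbour `z` of `y` not adjacent to `x` links `(x, y)` to `(t, y)` in `G⁺`. -/
lemma reflTransGen_ascendingIn {m : V} (hm : ∀ w, G.Reachable m w → l m ≤ l w)
    (hmp : G.Reachable m p.1.1) {x y : V} (hin : InAuxComponent G p x y) (hxy : l x < l y) :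
    Relation.ReflTransGen (AscendingIn G l p) m y := by
  induction x using (wellFounded_lt_comp l).induction generalizing y with
  | _ x ih =>
  by_cases hleft : ∃ w, w ≠ y ∧ G.Adj x w ∧ ¬ G.Adj y w
  · obtain ⟨w, hwy, hxw, hyw⟩ := hleft
    have hwx : l w < l x := (hR.lt_iff_lt_of_not_adj hin.adj hxw hyw hwy.symm).1 hxy
    exact (ih w hwx (hin.swap.of_not_adj hxw.symm hwy.symm hyw) hwx).tail ⟨hin, hxy⟩
  rcases eq_or_ne x m with rfl | hxm
  · exact .single ⟨hin, hxy⟩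
  have hmx : G.Reachable m x := hmp.trans hin.reachable
  obtain ⟨t, htx, hlt⟩ := hR.exists_adj_lt_of_reachable hmx
    ((hm x hmx).lt_of_ne fun h => hxm (hR.injective h).symm)
  push Not at hleft
  have hyt : G.Adj y t := hleft t (ne_of_apply_ne l (hlt.trans hxy).ne) htx.symm
  obtain ⟨z, hzx, hyz, hxz⟩ :=
    (SimpleGraph.exists_adj_not_adj_of_not_twins hin.adj (hin.not_twins hp)).resolve_left
      fun ⟨w, hwy, hxw, hyw⟩ => hyw (hleft w hwy hxw)
  have hyz_lt : l y < l z := hR.lt_of_not_lt hyz.ne' fun h =>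
    lt_asymm hxy ((hR.lt_iff_lt_of_not_adj hin.adj.symm hyz hxz hzx.symm).2 h)
  have hzt : ¬ G.Adj z t := fun h => hxz (hR.umbrella hlt (hxy.trans hyz_lt) h.symm).2
  have hzt_ne : z ≠ t := ne_of_apply_ne l (hlt.trans (hxy.trans hyz_lt)).ne'
  exact ih t hlt ((hin.of_not_adj hyz.symm hzx.symm hxz).of_not_adj hyt.symm hzt_ne hzt)
    (hlt.trans hxy)

lemma exists_ascendingIn_of_min {m : V} (hm : ∀ w, G.Reachable m w → l m ≤ l w)
    (hmp : G.Reachable m p.1.1) {x y : V} (hin : InAuxComponent G p x y) (hxy : l x < l y) :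
    ∃ c, AscendingIn G l p m c := by
  have hmy : m ≠ y := ne_of_apply_ne l ((hm x (hmp.trans hin.reachable)).trans_lt hxy).ne
  rcases (hR.reflTransGen_ascendingIn hp hm hmp hin hxy).cases_head with h | ⟨c, hc, -⟩
  · exact absurd h hmy
  · exact ⟨c, hc⟩

lemma reflTransGen_ascendingIn_min_max {m M : V} (hm : ∀ w, G.Reachable m w → l m ≤ l w)
    (hmp : G.Reachable m p.1.1) (hM : ∀ w, G.Reachable M w → l w ≤ l M)
    (hMp : G.Reachable M p.1.1) {x y : V} (hin : InAuxComponent G p x y) (hxy : l x < l y) :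
    Relation.ReflTransGen (AscendingIn G l p) m M := by
  -- in the mirrored model `M` is the leftmost vertex and `(y, x)` is ascending
  obtain ⟨c, hc, hlt⟩ := hR.neg.exists_ascendingIn_of_min hp
    (fun w hw => neg_le_neg (hR.le_iff_r_le.1 (hM w hw))) hMp hin.swap
    (neg_lt_neg (hR.lt_iff_r_lt.1 hxy))
  exact hR.reflTransGen_ascendingIn hp hm hmp hc.swap (hR.lt_iff_r_lt.2 (neg_lt_neg_iff.1 hlt))

end AscendingPaths

variable [Fintype V] {A : V → V → Prop}

/-- By consentaneity, the `G⁺`-component of `(u, v)` carries an ascending path of arcs from the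
leftmost to the rightmost vertex of the component, and that of `(a, b)` a descending one. -/
lemma hasDirectedCycle_of_opposite_arcs
    (hsub : ∀ u v, A u v → G.Adj u v) (hcons : Consentaneous G A) {u v a b : V}
    (huv : A u v) (hab : A a b) (hnuv : ¬ G.Twins u v) (hnab : ¬ G.Twins a b)
    (hluv : l u < l v) (hlab : l b < l a) (hua : G.Reachable u a) : HasDirectedCycle A := by
  classical
  obtain ⟨m, hum, hm⟩ := Finset.exists_min_image (Finset.univ.filter (G.Reachable u)) l
    ⟨u, by simp⟩
  obtain ⟨M, huM, hM⟩ := Finset.exists_max_image (Finset.univ.filter (G.Reachable u)) l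
    ⟨u, by simp⟩
  simp only [Finset.mem_filter, Finset.mem_univ, true_and] at hum huM hm hM
  have hmin : ∀ w, G.Reachable m w → l m ≤ l w := fun w hw => hm w (hum.trans hw)
  have hmax : ∀ w, G.Reachable M w → l w ≤ l M := fun w hw => hM w (huM.trans hw)
  have hmM : m ≠ M := ne_of_apply_ne l
    ((hm u .rfl).trans_lt (hluv.trans_le (hM v (hsub u v huv).reachable))).ne
  have h₁ : Relation.ReflTransGen A m M :=
    Relation.ReflTransGen.mono
      (fun x y hxy => hR.arc_of_inAuxComponent hcons huv hxy.1 (iff_of_true hxy.2 hluv)) _ _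
      (hR.reflTransGen_ascendingIn_min_max (p := ⟨(u, v), hsub u v huv⟩) hnuv hmin hum.symm
        hmax huM.symm ⟨hsub u v huv, .rfl⟩ hluv)
  have hlab' : -r a < -r b := neg_lt_neg (hR.lt_iff_r_lt.1 hlab)
  have h₂ : Relation.ReflTransGen A M m :=
    Relation.ReflTransGen.mono
      (fun x y hxy => hR.neg.arc_of_inAuxComponent hcons hab hxy.1 (iff_of_true hxy.2 hlab')) _ _
      (hR.neg.reflTransGen_ascendingIn_min_max (p := ⟨(a, b), hsub a b hab⟩) hnab
        (fun w hw => neg_le_neg (hR.le_iff_r_le.1 (hmax w hw))) (huM.symm.trans hua)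
        (fun w hw => neg_le_neg (hR.le_iff_r_le.1 (hmin w hw))) (hum.symm.trans hua)
        ⟨hsub a b hab, .rfl⟩ hlab')
  exact hasDirectedCycle_of_transGen (fun w h => (hsub w w h).ne rfl)
    (((Relation.reflTransGen_iff_eq_or_transGen.1 h₁).resolve_left hmM.symm).trans_left h₂)

end IsProperIntervalModel

section Position

variable {V : Type*} {G : SimpleGraph V} {l r : V → ℝ} {A : V → V → Prop}

def Flipped (G : SimpleGraph V) (l : V → ℝ) (A : V → V → Prop) (v : V) : Prop :=
  ∃ a b, A a b ∧ ¬ G.Twins a b ∧ l b < l a ∧ G.Reachable v a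

lemma flipped_congr {u v : V} (h : G.Reachable u v) : Flipped G l A u ↔ Flipped G l A v :=
  exists₂_congr fun _ _ => and_congr_right' <| and_congr_right' <| and_congr_right'
    ⟨h.symm.trans, h.trans⟩

variable [Fintype V]

open Classical in
noncomputable def twinMin (G : SimpleGraph V) (l : V → ℝ) (v : V) : ℝ :=
  (Finset.univ.filter (G.Twins v)).inf' ⟨v, by simpa using SimpleGraph.Twins.refl v⟩ l

open Classical in
/-- Distinct components may interleave, which is harmless: `SimpleGraph.IsUmbrella` only compares
vertices of one component. -/
noncomputable def position (G : SimpleGraph V) (l : V → ℝ) (A : V → V → Prop) (v : V) : ℝ :=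
  if Flipped G l A v then -twinMin G l v else twinMin G l v

lemma twinMin_le {v w : V} (h : G.Twins v w) : twinMin G l v ≤ l w :=
  Finset.inf'_le _ (by simpa using h)

lemma exists_twinMin_eq (v : V) : ∃ w, G.Twins v w ∧ twinMin G l v = l w := by
  obtain ⟨w, hw, he⟩ := Finset.exists_mem_eq_inf' _ l
  exact ⟨w, by simpa using hw, he⟩

lemma twinMin_congr {u v : V} (h : G.Twins u v) : twinMin G l u = twinMin G l v := by
  simp only [twinMin]
  congr 1
  ext w
  simpa using ⟨h.symm.trans, h.trans⟩

lemma position_of_flipped {v : V} (h : Flipped G l A v) : position G l A v = -twinMin G l v :=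
  if_pos h

lemma position_of_not_flipped {v : V} (h : ¬ Flipped G l A v) :
    position G l A v = twinMin G l v :=
  if_neg h

lemma position_congr {u v : V} (h : G.Twins u v) : position G l A u = position G l A v := by
  by_cases hf : Flipped G l A u
  · rw [position_of_flipped hf, position_of_flipped ((flipped_congr h.reachable).1 hf),
      twinMin_congr h]
  · rw [position_of_not_flipped hf,
      position_of_not_flipped (mt (flipped_congr h.reachable).2 hf), twinMin_congr h]

namespace IsProperIntervalModel

variable (hR : IsProperIntervalModel G l r)
include hR

lemma twinMin_lt {u v : V} (h : ¬ G.Twins u v) (hlt : l u < l v) :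
    twinMin G l u < twinMin G l v := by
  obtain ⟨w, hvw, hw⟩ := exists_twinMin_eq (G := G) (l := l) v
  refine lt_of_not_ge fun hle => h ?_
  have hwu : l w ≤ l u := hw ▸ hle.trans (twinMin_le (.refl u))
  exact (hR.twins_of_le_of_le hvw.symm hwu hlt.le).symm.trans hvw.symm

lemma twinMin_lt_iff {u v : V} (h : ¬ G.Twins u v) : twinMin G l u < twinMin G l v ↔ l u < l v :=
  ⟨fun h' => hR.lt_of_not_lt (SimpleGraph.ne_of_not_twins h).symm fun hvu =>
    lt_asymm h' (hR.twinMin_lt (fun h'' => h h''.symm) hvu), hR.twinMin_lt h⟩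

lemma twins_of_twinMin_eq {u v : V} (h : twinMin G l u = twinMin G l v) : G.Twins u v := by
  obtain ⟨a, hua, ha⟩ := exists_twinMin_eq (G := G) (l := l) u
  obtain ⟨b, hvb, hb⟩ := exists_twinMin_eq (G := G) (l := l) v
  obtain rfl := hR.injective (ha.symm.trans (h.trans hb))
  exact hua.trans hvb.symm

lemma position_lt_iff {u v : V} (hre : G.Reachable u v) (hnt : ¬ G.Twins u v) :
    position G l A u < position G l A v ↔ (l u < l v ↔ ¬ Flipped G l A u) := by
  by_cases hf : Flipped G l A u
  · rw [position_of_flipped hf, position_of_flipped ((flipped_congr hre).1 hf), neg_lt_neg_iff,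
      hR.twinMin_lt_iff fun h => hnt h.symm, iff_false_right (not_not.2 hf)]
    exact ⟨lt_asymm, hR.lt_of_not_lt (SimpleGraph.ne_of_not_twins hnt)⟩
  · rw [position_of_not_flipped hf, position_of_not_flipped (mt (flipped_congr hre).2 hf),
      hR.twinMin_lt_iff hnt, iff_true_right hf]

lemma twins_of_position_eq {u v : V} (hre : G.Reachable u v)
    (h : position G l A u = position G l A v) : G.Twins u v := by
  by_cases hf : Flipped G l A u
  · rw [position_of_flipped hf, position_of_flipped ((flipped_congr hre).1 hf)] at h
    exact hR.twins_of_twinMin_eq (neg_inj.1 h)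
  · rw [position_of_not_flipped hf, position_of_not_flipped (mt (flipped_congr hre).2 hf)] at h
    exact hR.twins_of_twinMin_eq h

lemma isUmbrella_position : G.IsUmbrella (position G l A) := by
  intro u v w huv h₁ h₂ huw
  have hvw : G.Reachable v w := huv.symm.trans huw.reachable
  have hnuv : ¬ G.Twins u v := fun h => h₁.ne (position_congr h)
  have hnvw : ¬ G.Twins v w := fun h => h₂.ne (position_congr h)
  rw [hR.position_lt_iff huv hnuv] at h₁
  rw [hR.position_lt_iff hvw hnvw, ← flipped_congr huv] at h₂
  by_cases hf : Flipped G l A u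
  · have hvu := hR.lt_of_not_lt (SimpleGraph.ne_of_not_twins hnuv) (h₁.not.2 (not_not.2 hf))
    have hwv := hR.lt_of_not_lt (SimpleGraph.ne_of_not_twins hnvw) (h₂.not.2 (not_not.2 hf))
    obtain ⟨hwv', hvu'⟩ := hR.umbrella hwv hvu huw.symm
    exact ⟨hvu'.symm, hwv'.symm⟩
  · exact hR.umbrella (h₁.2 hf) (h₂.2 hf) huw

lemma position_lt_of_arc (hsub : ∀ u v, A u v → G.Adj u v) (hcons : Consentaneous G A)
    (hA : ¬ HasDirectedCycle A) {u v : V} (huv : A u v) (hnt : ¬ G.Twins u v) :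
    position G l A u < position G l A v := by
  have hadj := hsub u v huv
  rw [hR.position_lt_iff hadj.reachable hnt]
  rcases lt_or_gt_of_ne (hR.injective.ne hadj.ne) with h | h
  · exact iff_of_true h fun ⟨a, b, hab, hnab, hba, hua⟩ =>
      hA (hR.hasDirectedCycle_of_opposite_arcs hsub hcons huv hab hnt hnab h hba hua)
  · exact iff_of_false (lt_asymm h) (not_not.2 ⟨u, v, huv, hnt, h, .rfl⟩)

end IsProperIntervalModel

end Position

theorem stmt_12_general {V : Type*} [Fintype V] (G : SimpleGraph V) (A : V → V → Prop)
    (hsub : ∀ u v : V, A u v → G.Adj u v)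
    (hpig : IsProperIntervalGraph G)
    (hcons : Consentaneous G A) :
    (∃ D : V → V → Prop, IsOrientation G D ∧ (∀ u v : V, A u v → D u v) ∧
        IsLocalTournament D ∧ ¬ HasDirectedCycle D) ↔
      ¬ HasDirectedCycle A := by
  refine ⟨fun ⟨_, _, hAD, _, hD⟩ hA => hD (hA.mono hAD), fun hA => ?_⟩
  obtain ⟨l, r, hle, hnest, hadj⟩ := hpig
  have hR : IsProperIntervalModel G l r := ⟨hle, hnest, hadj⟩
  obtain ⟨τ, hτ, hAτ⟩ := exists_injective_lt_of_acyclic fun v h =>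
    hA (hasDirectedCycle_of_transGen (fun w h => (hsub w w h).ne rfl) h)
  let φ : V → ℝ ×ₗ ℕ := fun v => toLex (position G l A v, τ v)
  have hφ : Function.Injective φ := fun u v h => hτ (congrArg (fun x => (ofLex x).2) h)
  have hAφ : ∀ u v, A u v → φ u < φ v := fun u v huv => by
    by_cases htw : G.Twins u v
    · exact Prod.Lex.toLex_lt_toLex.2 (Or.inr ⟨position_congr htw, hAτ u v huv⟩)
    · exact Prod.Lex.toLex_lt_toLex.2 (Or.inl (hR.position_lt_of_arc hsub hcons hA huv htw))
  have humb : G.IsUmbrella φ :=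
    hR.isUmbrella_position.lex (fun u v huv => hR.twins_of_position_eq huv) τ
  exact ⟨_, SimpleGraph.isOrientation_of_injective hφ, fun u v huv => ⟨hsub u v huv, hAφ u v huv⟩,
    humb.isLocalTournament hφ, not_hasDirectedCycle_of_lt φ fun u v h => h.2⟩

/-- A consentaneous partially oriented graph whose underlying
graph is a proper interval graph can be completed to an acyclic local
tournament iff it contains no directed cycle. -/
theorem stmt_12 {V : Type*} [Fintype V] (G : SimpleGraph V) (A : V → V → Prop)
    (hsub : ∀ u v : V, A u v → G.Adj u v)
    (hasym : IsOrientedGraph A)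
    (hpig : IsProperIntervalGraph G)
    (hcons : Consentaneous G A) :
    (∃ D : V → V → Prop, IsOrientation G D ∧ (∀ u v : V, A u v → D u v) ∧
        IsLocalTournament D ∧ ¬ HasDirectedCycle D) ↔
      ¬ HasDirectedCycle A :=
  stmt_12_general G A hsub hpig hcons
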